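/- Let V₁,…,V_N ∈ ℝ^{m×n} and D₁,…,D_N ∈ ℝ^{m×n} satisfy ‖D_i‖ ≤ 1 and ⟨V_i, D_i⟩ = ‖V_i‖_* for each i. Let V̄ := (1/N)∑_{i=1}^N V_i and D̄ := (1/N)∑_{i=1}^N D_i. Then for every G ∈ ℝ^{m×n}, −⟨V̄, D̄⟩ ≤ −‖G‖_* + ‖G − V̄‖_* + (2/N)∑_{i=1}^N ‖V̄ − V_i‖_*. -/

import Mathlib

open Matrix Kronecker

/-- Spectral norm: ℓ²→ℓ² operator norm of a real matrix. -/
noncomputable def specNorm {ι κ : Type*} [Fintype ι] [Fintype κ] [DecidableEq κ]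
    (A : Matrix ι κ ℝ) : ℝ :=
  ‖LinearMap.toContinuousLinearMap (Matrix.toEuclideanLin A)‖

/-- Nuclear norm: trace of the positive semidefinite square root of `Aᵀ * A`. -/
noncomputable def nucNorm {ι κ : Type*} [Fintype ι] [Fintype κ] [DecidableEq κ]
    (A : Matrix ι κ ℝ) : ℝ :=
  Matrix.trace ((Matrix.posSemidef_conjTranspose_mul_self A).1.eigenvectorUnitary.1 *
    diagonal ((↑) ∘ (Real.sqrt ∘ (Matrix.posSemidef_conjTranspose_mul_self A).1.eigenvalues)) *
    (star (Matrix.posSemidef_conjTranspose_mul_self A).1.eigenvectorUnitary : Matrix κ κ ℝ))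

/-- Frobenius norm. -/
noncomputable def frobNorm {ι κ : Type*} [Fintype ι] [Fintype κ] (A : Matrix ι κ ℝ) : ℝ :=
  Real.sqrt (∑ i, ∑ j, (A i j) ^ 2)

/-- Trace inner product `⟨A, B⟩ = trace (Aᵀ B)`. -/
noncomputable def tin {ι κ : Type*} [Fintype ι] [Fintype κ] (A B : Matrix ι κ ℝ) : ℝ :=
  Matrix.trace (Aᵀ * B)

/-- Vertical stacking of `N` matrices of size `m × n`. -/
def vstack {N m n : ℕ} (Y : Fin N → Matrix (Fin m) (Fin n) ℝ) :
    Matrix (Fin N × Fin m) (Fin n) ℝ :=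
  fun p j => Y p.1 p.2 j

/-! The nuclear norm is dual to the spectral norm: `⟨A, B⟩ ≤ ‖A‖_* ‖B‖`, and equality is attained
at the polar factor of `A`, built from an orthonormal eigenbasis of `AᵀA`. Duality yields the
triangle inequality for `‖·‖_*`, and then for each `i`
`⟨V̄, D_i⟩ = ‖V_i‖_* + ⟨V̄ - V_i, D_i⟩ ≥ ‖V̄‖_* - 2‖V̄ - V_i‖_* ≥ ‖G‖_* - ‖G - V̄‖_* - 2‖V̄ - V_i‖_*`;
averaging over `i` gives the claim. -/

open scoped Matrix.Norms.L2Operator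

section
variable {ι κ : Type*} [Fintype ι]

lemma sq_transpose_mul_apply_le (X Y : Matrix ι κ ℝ) (k : κ) :
    (Xᵀ * Y) k k ^ 2 ≤ (Xᵀ * X) k k * (Yᵀ * Y) k k := by
  simpa only [mul_apply, transpose_apply, sq] using
    Finset.sum_mul_sq_le_sq_mul_sq Finset.univ (fun j => X j k) (fun j => Y j k)

variable [Fintype κ]

lemma tin_add_left (A B C : Matrix ι κ ℝ) : tin (A + B) C = tin A C + tin B C := by
  simp [tin, Matrix.add_mul]

lemma tin_neg_right (A B : Matrix ι κ ℝ) : tin A (-B) = -tin A B := by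
  simp [tin]

lemma tin_smul_right (c : ℝ) (A B : Matrix ι κ ℝ) : tin A (c • B) = c * tin A B := by
  simp [tin]

lemma tin_sum_right {σ : Type*} (s : Finset σ) (A : Matrix ι κ ℝ) (B : σ → Matrix ι κ ℝ) :
    tin A (∑ i ∈ s, B i) = ∑ i ∈ s, tin A (B i) := by
  simp [tin, Matrix.mul_sum]

variable [DecidableEq κ]

lemma specNorm_eq_norm (A : Matrix ι κ ℝ) : specNorm A = ‖A‖ := rfl

lemma norm_le_one_of_transpose_mul_self_eq_diagonal {W : Matrix ι κ ℝ} {d : κ → ℝ}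
    (hW : Wᵀ * W = diagonal d) (hd : ∀ k, |d k| ≤ 1) : ‖W‖ ≤ 1 := by
  have h := l2_opNorm_conjTranspose_mul_self W
  rw [conjTranspose_eq_transpose_of_trivial, hW, l2_opNorm_diagonal] at h
  have h1 : ‖d‖ ≤ 1 := (pi_norm_le_iff_of_nonneg zero_le_one).mpr hd
  nlinarith [norm_nonneg W]

lemma norm_le_one_of_transpose_mul_self_eq_one {U : Matrix ι κ ℝ} (hU : Uᵀ * U = 1) :
    ‖U‖ ≤ 1 :=
  norm_le_one_of_transpose_mul_self_eq_diagonal (hU.trans diagonal_one.symm) fun _ => by simp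

lemma exists_orthogonal_nucNorm_eq_sum (A : Matrix ι κ ℝ) :
    ∃ U : Matrix κ κ ℝ, Uᵀ * U = 1 ∧ U * Uᵀ = 1 ∧ ∃ μ : κ → ℝ, (∀ k, 0 ≤ μ k) ∧
      nucNorm A = ∑ k, μ k ∧ (A * U)ᵀ * (A * U) = diagonal (fun k => μ k ^ 2) := by
  set hA := (posSemidef_conjTranspose_mul_self A).1
  set U : Matrix κ κ ℝ := ↑hA.eigenvectorUnitary
  have hUT : star U = Uᵀ := conjTranspose_eq_transpose_of_trivial U
  refine ⟨U, hUT ▸ Unitary.coe_star_mul_self _, hUT ▸ Unitary.coe_mul_star_self _,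
    fun k => √(hA.eigenvalues k), fun _ => Real.sqrt_nonneg _, ?_, ?_⟩
  · rw [nucNorm, trace_mul_cycle, Unitary.coe_star_mul_self, one_mul, trace_diagonal]
    simp
  · have h := hA.conjStarAlgAut_star_eigenvectorUnitary
    simp only [Unitary.conjStarAlgAut_apply, star_star, Unitary.coe_star] at h
    rw [transpose_mul, Matrix.mul_assoc, ← Matrix.mul_assoc Aᵀ, ← hUT, ← Matrix.mul_assoc,
      ← conjTranspose_eq_transpose_of_trivial A, h]
    congr 1
    funext k
    exact (Real.sq_sqrt ((posSemidef_conjTranspose_mul_self A).eigenvalues_nonneg k)).symm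

lemma transpose_mul_self_apply_le (Y : Matrix ι κ ℝ) (k : κ) : (Yᵀ * Y) k k ≤ ‖Y‖ ^ 2 := by
  have h := Y.l2_opNorm_mulVec (WithLp.toLp 2 (Pi.single k 1))
  have h2 := pow_le_pow_left₀ (norm_nonneg _) h 2
  rw [EuclideanSpace.norm_sq_eq] at h2
  simpa [mul_apply, sq] using h2

lemma tin_le_nucNorm_mul_norm (A B : Matrix ι κ ℝ) : tin A B ≤ nucNorm A * ‖B‖ := by
  obtain ⟨U, hUU, hUU', μ, hμ, hnuc, hAU⟩ := exists_orthogonal_nucNorm_eq_sum A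
  have htin : trace ((A * U)ᵀ * (B * U)) = tin A B := by
    rw [transpose_mul, ← Matrix.mul_assoc, Matrix.mul_assoc Uᵀ, trace_mul_cycle, hUU',
      Matrix.one_mul, tin]
  have hBU : ‖B * U‖ ≤ ‖B‖ := by
    simpa using (l2_opNorm_mul B U).trans
      (mul_le_of_le_one_right (norm_nonneg B) (norm_le_one_of_transpose_mul_self_eq_one hUU))
  have hcol : ∀ k, ((A * U)ᵀ * (B * U)) k k ≤ μ k * ‖B‖ := fun k => by
    refine (abs_le_of_sq_le_sq' ?_ (mul_nonneg (hμ k) (norm_nonneg B))).2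
    calc ((A * U)ᵀ * (B * U)) k k ^ 2
        ≤ ((A * U)ᵀ * (A * U)) k k * ((B * U)ᵀ * (B * U)) k k := sq_transpose_mul_apply_le _ _ k
      _ ≤ μ k ^ 2 * ‖B‖ ^ 2 := by
        rw [hAU, diagonal_apply_eq]
        gcongr
        exact (transpose_mul_self_apply_le _ k).trans (by gcongr)
      _ = (μ k * ‖B‖) ^ 2 := (mul_pow _ _ _).symm
  rw [← htin, hnuc, Finset.sum_mul, trace]
  exact Finset.sum_le_sum fun k _ => hcol k

lemma exists_norm_le_one_tin_eq_nucNorm (A : Matrix ι κ ℝ) :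
    ∃ D : Matrix ι κ ℝ, ‖D‖ ≤ 1 ∧ tin A D = nucNorm A := by
  obtain ⟨U, hUU, hUU', μ, -, hnuc, hAU⟩ := exists_orthogonal_nucNorm_eq_sum A
  -- Since `0⁻¹ = 0`, `diagonal μ⁻¹` inverts the singular values on the support of `μ` only,
  -- so `W * Uᵀ` is the polar factor of `A`.
  set W := A * U * diagonal (fun k => (μ k)⁻¹)
  have hWW : Wᵀ * W = diagonal (fun k => (μ k)⁻¹ * (μ k ^ 2 * (μ k)⁻¹)) := by
    rw [transpose_mul, diagonal_transpose, Matrix.mul_assoc, ← Matrix.mul_assoc (A * U)ᵀ, hAU,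
      diagonal_mul_diagonal, diagonal_mul_diagonal]
  have hW : ‖W‖ ≤ 1 := norm_le_one_of_transpose_mul_self_eq_diagonal hWW fun k => by
    rcases eq_or_ne (μ k) 0 with hk | hk
    · simp [hk]
    · rw [show (μ k)⁻¹ * (μ k ^ 2 * (μ k)⁻¹) = 1 by field_simp, abs_one]
  refine ⟨W * Uᵀ, ?_, ?_⟩
  · have hUt : ‖Uᵀ‖ ≤ 1 := norm_le_one_of_transpose_mul_self_eq_one (by rwa [transpose_transpose])
    calc ‖W * Uᵀ‖ ≤ ‖W‖ * ‖Uᵀ‖ := l2_opNorm_mul W Uᵀ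
      _ ≤ 1 := mul_le_one₀ hW (norm_nonneg _) hUt
  · rw [tin, ← Matrix.mul_assoc, trace_mul_cycle, ← Matrix.mul_assoc, ← Matrix.mul_assoc,
      ← transpose_mul, Matrix.mul_assoc (A * U)ᵀ, hAU, diagonal_mul_diagonal, trace_diagonal, hnuc]
    simp only [sq, mul_self_mul_inv]

lemma nucNorm_nonneg (A : Matrix ι κ ℝ) : 0 ≤ nucNorm A := by
  obtain ⟨-, -, -, μ, hμ, hnuc, -⟩ := exists_orthogonal_nucNorm_eq_sum A
  exact hnuc ▸ Finset.sum_nonneg fun k _ => hμ k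

lemma tin_le_nucNorm {A B : Matrix ι κ ℝ} (hB : ‖B‖ ≤ 1) : tin A B ≤ nucNorm A :=
  (tin_le_nucNorm_mul_norm A B).trans (mul_le_of_le_one_right (nucNorm_nonneg A) hB)

lemma neg_nucNorm_le_tin {A B : Matrix ι κ ℝ} (hB : ‖B‖ ≤ 1) : -nucNorm A ≤ tin A B := by
  have h := tin_le_nucNorm (A := A) (B := -B) (by rwa [norm_neg])
  rw [tin_neg_right] at h
  linarith

lemma nucNorm_add_le (A B : Matrix ι κ ℝ) : nucNorm (A + B) ≤ nucNorm A + nucNorm B := by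
  obtain ⟨D, hD, hAB⟩ := exists_norm_le_one_tin_eq_nucNorm (A + B)
  rw [← hAB, tin_add_left]
  exact add_le_add (tin_le_nucNorm hD) (tin_le_nucNorm hD)

lemma nucNorm_le_add_nucNorm_sub (A B : Matrix ι κ ℝ) : nucNorm A ≤ nucNorm B + nucNorm (A - B) := by
  simpa using nucNorm_add_le B (A - B)

lemma nucNorm_sub_nucNorm_sub_sub_two_mul_le_tin (G W : Matrix ι κ ℝ) {V D : Matrix ι κ ℝ}
    (hD : ‖D‖ ≤ 1) (hVD : tin V D = nucNorm V) :
    nucNorm G - nucNorm (G - W) - 2 * nucNorm (W - V) ≤ tin W D := by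
  have hsplit : tin W D = tin V D + tin (W - V) D := by rw [← tin_add_left, add_sub_cancel]
  have hdev := neg_nucNorm_le_tin (A := W - V) hD
  have hW := nucNorm_le_add_nucNorm_sub W V
  have hG := nucNorm_le_add_nucNorm_sub G W
  linarith

end

theorem stmt12 {N m n : ℕ} (hN : 0 < N)
    (V D : Fin N → Matrix (Fin m) (Fin n) ℝ)
    (hD : ∀ i, specNorm (D i) ≤ 1)
    (hVD : ∀ i, tin (V i) (D i) = nucNorm (V i)) :
    ∀ G : Matrix (Fin m) (Fin n) ℝ,
      -tin ((N : ℝ)⁻¹ • ∑ i, V i) ((N : ℝ)⁻¹ • ∑ i, D i)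
        ≤ -nucNorm G + nucNorm (G - (N : ℝ)⁻¹ • ∑ i, V i)
          + 2 / (N : ℝ) * ∑ i, nucNorm (((N : ℝ)⁻¹ • ∑ j, V j) - V i) := by
  intro G
  set Vb := (N : ℝ)⁻¹ • ∑ i, V i
  have hsum : N * (nucNorm G - nucNorm (G - Vb)) - 2 * ∑ i, nucNorm (Vb - V i)
      ≤ ∑ i, tin Vb (D i) := by
    have := Finset.sum_le_sum (s := Finset.univ) fun i _ =>
      nucNorm_sub_nucNorm_sub_sub_two_mul_le_tin G Vb (specNorm_eq_norm (D i) ▸ hD i) (hVD i)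
    rwa [Finset.sum_sub_distrib, Finset.sum_const, Finset.card_univ, Fintype.card_fin,
      nsmul_eq_mul, ← Finset.mul_sum] at this
  have havg : nucNorm G - nucNorm (G - Vb) - 2 / N * ∑ i, nucNorm (Vb - V i)
      ≤ (N : ℝ)⁻¹ * ∑ i, tin Vb (D i) := by
    rw [le_inv_mul_iff₀ (by exact_mod_cast hN)]
    refine le_of_eq_of_le ?_ hsum
    rw [mul_sub, ← mul_assoc, mul_div_cancel₀ _ (by positivity)]
  rw [tin_smul_right, tin_sum_right]
  linarith
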